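/- arXiv:0710.4464 — 2 statements merged into one kernel-verified Lean document; each statement's English description precedes it below -/
import Mathlib

section
/- Let e be a nilpotent endomorphism of an n-dimensional vector space V with Jordan type given by a partition (λ_i) of n, realized via a basis {e^a·v_i : 0 ≤ a ≤ λ_i - 1}. Suppose there exist indices i₁, i₂ with 0 < λ_{i₁} = λ_{i₂} - 1. Define e_{i₁,i₂} ∈ gl(V) by e_{i₁,i₂}(e^a·v_{i₁}) = e^{a+1}·v_{i₂} for 0 ≤ a ≤ λ_{i₁}-1, e_{i₁,i₂}(e^a·v_{i₂}) = e^a·v_{i₁} for 0 ≤ a ≤ λ_{i₁}-1, and e_{i₁,i₂}(e^a·v_j) = 0 otherwise. Then e_{i₁,i₂}² = e_{i₁} + e_{i₂}, where e_j denotes the restriction of e to the Jordan block V_j = span{e^a·v_{j}} extended by zero on the other blocks; in particular e₁ := e_{i₁,i₂} + Σ_{j ≠ i₁,i₂} e_j commutes with e. -/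
variable {K V : Type*} [Field K] [AddCommGroup V] [Module K V]
variable {ι : Type*} [Fintype ι] [DecidableEq ι]

/-- The restriction `e_j` of `e` to the Jordan block indexed by `j`, extended by zero
on the other Jordan blocks. -/
noncomputable def eBlock {lam : ι → ℕ} (b : Module.Basis (Σ j : ι, Fin (lam j)) K V)
    (e : Module.End K V) (j : ι) : Module.End K V :=
  b.constr K fun s => if s.1 = j then e (b s) else 0

/-- The endomorphism `e_{i₁,i₂}` sending `e^a·v_{i₁} ↦ e^{a+1}·v_{i₂}` and
`e^a·v_{i₂} ↦ e^a·v_{i₁}` (for `0 ≤ a ≤ λ_{i₁} - 1`), and vanishing otherwise. -/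
noncomputable def eMix {lam : ι → ℕ} (b : Module.Basis (Σ j : ι, Fin (lam j)) K V)
    (e : Module.End K V) (v : ι → V) (i₁ i₂ : ι) : Module.End K V :=
  b.constr K fun s =>
    if s.1 = i₁ then (e ^ ((s.2 : ℕ) + 1)) (v i₂)
    else if s.1 = i₂ then (if (s.2 : ℕ) < lam i₁ then (e ^ (s.2 : ℕ)) (v i₁) else 0)
    else 0

/-!
Since `e^a·v_j = 0` for `a ≥ λ_j`, and `λ_{i₂} = λ_{i₁} + 1`, the formulas defining `e_j` and
`e_{i₁,i₂}` on the basis vectors `e^a·v_k`, `a < λ_k`, hold for every `a ∈ ℕ`: both sides vanish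
beyond the block. In this form each of these maps visibly sends `e^{a+1}·v_k` to `e` applied to
the image of `e^a·v_k`, so it commutes with `e`, and `e_{i₁,i₂}²` is computed on `e^a·v_k` by
composing two such formulas.
-/

namespace Module.Basis

variable {M : Type*} [AddCommGroup M] [Module K M]
variable {lam : ι → ℕ} {v : ι → V} {e : Module.End K V}
  {b : Basis (Σ j : ι, Fin (lam j)) K V}
  (hb : ∀ (j : ι) (a : Fin (lam j)), b ⟨j, a⟩ = (e ^ (a : ℕ)) (v j))
  (he0 : ∀ j : ι, (e ^ lam j) (v j) = 0)

omit [Fintype ι] [DecidableEq ι]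

include hb

theorem ext_of_pow_apply {f g : V →ₗ[K] M}
    (h : ∀ (j : ι) (a : ℕ), f ((e ^ a) (v j)) = g ((e ^ a) (v j))) : f = g :=
  b.ext fun ⟨j, a⟩ => by rw [hb]; exact h j a

theorem commute_of_pow_succ_apply {f : Module.End K V}
    (h : ∀ (j : ι) (a : ℕ), f ((e ^ (a + 1)) (v j)) = e (f ((e ^ a) (v j)))) :
    Commute e f :=
  ext_of_pow_apply hb fun j a => by
    rw [Module.End.mul_apply, Module.End.mul_apply, ← h, pow_succ', Module.End.mul_apply]

include he0

theorem constr_apply_pow (φ : (Σ j : ι, Fin (lam j)) → M) (k : ι) (a : ℕ) :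
    b.constr K φ ((e ^ a) (v k)) = if h : a < lam k then φ ⟨k, ⟨a, h⟩⟩ else 0 := by
  split_ifs with h
  · rw [← hb k ⟨a, h⟩, constr_basis]
  · rw [Module.End.pow_map_zero_of_le (not_lt.1 h) (he0 k), map_zero]

end Module.Basis

open Module.Basis

section JordanBasis

variable {lam : ι → ℕ} {v : ι → V} {e : Module.End K V}
  {b : Module.Basis (Σ j : ι, Fin (lam j)) K V}
  (hb : ∀ (j : ι) (a : Fin (lam j)), b ⟨j, a⟩ = (e ^ (a : ℕ)) (v j))
  (he0 : ∀ j : ι, (e ^ lam j) (v j) = 0)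
  {i₁ i₂ : ι}

omit [Fintype ι]

include hb he0

theorem eBlock_apply_pow (j k : ι) (a : ℕ) :
    eBlock b e j ((e ^ a) (v k)) = if k = j then (e ^ (a + 1)) (v k) else 0 := by
  rw [eBlock, constr_apply_pow hb he0]
  split_ifs with ha hkj
  · rw [hb, pow_succ', Module.End.mul_apply]
  · rfl
  · rw [Module.End.pow_map_zero_of_le (by omega) (he0 k)]
  · rfl

theorem commute_eBlock (j : ι) : Commute e (eBlock b e j) :=
  commute_of_pow_succ_apply hb fun k a => by
    rw [eBlock_apply_pow hb he0, eBlock_apply_pow hb he0]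
    split_ifs
    · rw [pow_succ' e (a + 1), Module.End.mul_apply]
    · rw [map_zero]

theorem eMix_apply_pow_left (hle : lam i₂ ≤ lam i₁ + 1) (a : ℕ) :
    eMix b e v i₁ i₂ ((e ^ a) (v i₁)) = (e ^ (a + 1)) (v i₂) := by
  rw [eMix, constr_apply_pow hb he0]
  by_cases ha : a < lam i₁
  · simp [ha]
  · rw [dif_neg ha, Module.End.pow_map_zero_of_le (by omega) (he0 i₂)]

theorem eMix_apply_pow_right (hne : i₁ ≠ i₂) (hle : lam i₁ ≤ lam i₂) (a : ℕ) :
    eMix b e v i₁ i₂ ((e ^ a) (v i₂)) = (e ^ a) (v i₁) := by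
  rw [eMix, constr_apply_pow hb he0]
  by_cases ha : a < lam i₁
  · simp [ha, hne.symm, show a < lam i₂ by omega]
  · rw [Module.End.pow_map_zero_of_le (not_lt.1 ha) (he0 i₁)]
    simp [ha, hne.symm]

theorem eMix_apply_pow_of_ne {k : ι} (hk₁ : k ≠ i₁) (hk₂ : k ≠ i₂) (a : ℕ) :
    eMix b e v i₁ i₂ ((e ^ a) (v k)) = 0 := by
  rw [eMix, constr_apply_pow hb he0]
  simp [hk₁, hk₂]

variable (hne : i₁ ≠ i₂) (h2 : lam i₂ = lam i₁ + 1)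
include hne h2

theorem commute_eMix : Commute e (eMix b e v i₁ i₂) :=
  commute_of_pow_succ_apply hb fun k a => by
    rcases eq_or_ne k i₁ with rfl | hk₁
    · rw [eMix_apply_pow_left hb he0 h2.le, eMix_apply_pow_left hb he0 h2.le,
        pow_succ' e (a + 1), Module.End.mul_apply]
    rcases eq_or_ne k i₂ with rfl | hk₂
    · rw [eMix_apply_pow_right hb he0 hne (by omega), eMix_apply_pow_right hb he0 hne (by omega),
        pow_succ', Module.End.mul_apply]
    · rw [eMix_apply_pow_of_ne hb he0 hk₁ hk₂, eMix_apply_pow_of_ne hb he0 hk₁ hk₂, map_zero]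

theorem eMix_sq : eMix b e v i₁ i₂ ^ 2 = eBlock b e i₁ + eBlock b e i₂ :=
  ext_of_pow_apply hb fun k a => by
    rw [pow_two, Module.End.mul_apply, LinearMap.add_apply, eBlock_apply_pow hb he0,
      eBlock_apply_pow hb he0]
    rcases eq_or_ne k i₁ with rfl | hk₁
    · rw [eMix_apply_pow_left hb he0 h2.le, eMix_apply_pow_right hb he0 hne (by omega),
        if_pos rfl, if_neg hne, add_zero]
    rcases eq_or_ne k i₂ with rfl | hk₂
    · rw [eMix_apply_pow_right hb he0 hne (by omega), eMix_apply_pow_left hb he0 h2.le,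
        if_neg hk₁, if_pos rfl, zero_add]
    · rw [eMix_apply_pow_of_ne hb he0 hk₁ hk₂, map_zero, if_neg hk₁, if_neg hk₂, add_zero]

end JordanBasis

theorem eMix_sq_and_commute_general
    (lam : ι → ℕ) (v : ι → V) (e : Module.End K V)
    (b : Module.Basis (Σ j : ι, Fin (lam j)) K V)
    (hb : ∀ (j : ι) (a : Fin (lam j)), b ⟨j, a⟩ = (e ^ (a : ℕ)) (v j))
    (he0 : ∀ j : ι, (e ^ lam j) (v j) = 0)
    (i₁ i₂ : ι) (hne : i₁ ≠ i₂) (h2 : lam i₂ = lam i₁ + 1) :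
    (eMix b e v i₁ i₂) ^ 2 = eBlock b e i₁ + eBlock b e i₂ ∧
      Commute e
        (eMix b e v i₁ i₂ + ∑ j ∈ (Finset.univ.erase i₁).erase i₂, eBlock b e j) :=
  ⟨eMix_sq hb he0 hne h2,
    (commute_eMix hb he0 hne h2).add_right
      (Commute.sum_right _ _ _ fun j _ => commute_eBlock hb he0 j)⟩

/-- If `e` is nilpotent with Jordan type `(λ_j)` and `0 < λ_{i₁} = λ_{i₂} - 1`, then
`e_{i₁,i₂}² = e_{i₁} + e_{i₂}`; in particular
`e₁ = e_{i₁,i₂} + Σ_{j ≠ i₁, i₂} e_j` commutes with `e`. -/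
theorem eMix_sq_and_commute
    (lam : ι → ℕ) (v : ι → V) (e : Module.End K V)
    (b : Module.Basis (Σ j : ι, Fin (lam j)) K V)
    (hb : ∀ (j : ι) (a : Fin (lam j)), b ⟨j, a⟩ = (e ^ (a : ℕ)) (v j))
    (he0 : ∀ j : ι, (e ^ lam j) (v j) = 0)
    (i₁ i₂ : ι) (hne : i₁ ≠ i₂) (h1 : 0 < lam i₁) (h2 : lam i₂ = lam i₁ + 1) :
    (eMix b e v i₁ i₂) ^ 2 = eBlock b e i₁ + eBlock b e i₂ ∧
      Commute e
        (eMix b e v i₁ i₂ + ∑ j ∈ (Finset.univ.erase i₁).erase i₂, eBlock b e j) :=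
  eMix_sq_and_commute_general lam v e b hb he0 i₁ i₂ hne h2
end

section
/- Let (g,θ) be a semisimple symmetric Lie algebra, (e,h,f) a normal sl2-triple (e,f ∈ p, h ∈ k), and suppose there exist t ∈ p(e,0) and ξ ∈ g(f,-1) with [t,ξ] = ξ, [t,θ(ξ)] = -θ(ξ), and L(e,[ξ,θ(ξ)]) ≠ 0. Then z := ξ + θ(ξ) ∈ k(f,-1) satisfies [[e,z],z] ≠ 0. -/
/-!
Since `ξ` and `θ ξ` are eigenvectors of `ad t` with eigenvalues `1` and `-1`, the element
`z = ξ + θ ξ` satisfies `⁅z, t⁆ = θ ξ - ξ` and hence `⁅z, ⁅z, t⁆⁆ = 2 • ⁅ξ, θ ξ⁆`. Invariance of the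
Killing form then gives `L(⁅⁅e, z⁆, z⁆, t) = L(e, ⁅z, ⁅z, t⁆⁆) = 2 L(e, ⁅ξ, θ ξ⁆) ≠ 0`.
-/

section Involution

variable {R L : Type*} [CommRing R] [LieRing L] [LieAlgebra R L] (θ : L →ₗ⁅R⁆ L)

theorem LieHom.map_add_self_of_involutive (hθ : ∀ x, θ (θ x) = x) (x : L) :
    θ (x + θ x) = x + θ x := by
  rw [map_add, hθ, add_comm]

theorem LieHom.lie_apply_of_apply_eq_self {a x y : L} (ha : θ a = a) (hx : ⁅a, x⁆ = y) :
    ⁅a, θ x⁆ = θ y := by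
  rw [← hx, LieHom.map_lie, ha]

theorem LieHom.lie_apply_of_apply_eq_neg {a x y : L} (ha : θ a = -a) (hx : ⁅a, x⁆ = y) :
    ⁅a, θ x⁆ = -θ y := by
  rw [← hx, LieHom.map_lie, ha, neg_lie, neg_neg]

end Involution

theorem lie_add_sub_eq_two_smul_lie (R : Type*) {L : Type*} [CommRing R] [LieRing L]
    [LieAlgebra R L] (ξ η : L) : ⁅ξ + η, η - ξ⁆ = (2 : R) • ⁅ξ, η⁆ := by
  rw [add_lie, lie_sub, lie_sub, lie_self, lie_self, sub_zero, zero_sub, ← lie_skew ξ η, two_smul]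

section TraceForm

variable (R : Type*) {L : Type*} [CommRing R] [LieRing L] [LieAlgebra R L]
  (M : Type*) [AddCommGroup M] [Module R M] [LieRingModule L M] [LieModule R L M]

theorem LieModule.traceForm_lie_lie_add_eq_two_mul {t ξ η : L} (hξ : ⁅t, ξ⁆ = ξ)
    (hη : ⁅t, η⁆ = -η) (e : L) :
    LieModule.traceForm R L M ⁅⁅e, ξ + η⁆, ξ + η⁆ t = 2 * LieModule.traceForm R L M e ⁅ξ, η⁆ := by
  have hzt : ⁅ξ + η, t⁆ = η - ξ := by
    rw [← lie_skew, lie_add, hξ, hη]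
    abel
  rw [traceForm_apply_lie_apply, traceForm_apply_lie_apply, hzt, lie_add_sub_eq_two_smul_lie R,
    map_smul, smul_eq_mul]

end TraceForm

theorem z_in_kf_and_double_bracket_ne_zero_general
    (K : Type*) [Field K] [CharZero K]
    (g : Type*) [LieRing g] [LieAlgebra K g]
    (θ : g →ₗ⁅K⁆ g) (hθ : ∀ x, θ (θ x) = x)
    (e h f : g) (hpf : θ f = -f) (hkh : θ h = h)
    (t : g)
    (ξ : g) (hfξ : ⁅f, ξ⁆ = 0) (hhξ : ⁅h, ξ⁆ = -ξ)
    (htξ : ⁅t, ξ⁆ = ξ) (htθξ : ⁅t, θ ξ⁆ = -θ ξ)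
    (hL : killingForm K g e ⁅ξ, θ ξ⁆ ≠ 0) :
    θ (ξ + θ ξ) = ξ + θ ξ ∧ ⁅f, ξ + θ ξ⁆ = 0 ∧ ⁅h, ξ + θ ξ⁆ = -(ξ + θ ξ) ∧
      ⁅⁅e, ξ + θ ξ⁆, ξ + θ ξ⁆ ≠ 0 := by
  have hfθξ : ⁅f, θ ξ⁆ = 0 := by
    rw [θ.lie_apply_of_apply_eq_neg hpf hfξ, map_zero, neg_zero]
  have hhθξ : ⁅h, θ ξ⁆ = -θ ξ := by
    rw [θ.lie_apply_of_apply_eq_self hkh hhξ, map_neg]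
  refine ⟨θ.map_add_self_of_involutive hθ ξ, by rw [lie_add, hfξ, hfθξ, add_zero],
    by rw [lie_add, hhξ, hhθξ, neg_add], fun hz => hL ?_⟩
  have key := LieModule.traceForm_lie_lie_add_eq_two_mul K g htξ htθξ e
  rw [hz, map_zero, LinearMap.zero_apply, zero_eq_mul] at key
  exact key.resolve_left two_ne_zero

/-- In a semisimple symmetric Lie algebra, given a normal `sl₂`-triple `(e,h,f)`,
`t ∈ p(e,0)` and `ξ ∈ g(f,-1)` with `[t,ξ] = ξ`, `[t,θ(ξ)] = -θ(ξ)` and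
`L(e,[ξ,θ(ξ)]) ≠ 0`, the element `z = ξ + θ(ξ)` lies in `k(f,-1)` and satisfies
`[[e,z],z] ≠ 0`. -/
theorem z_in_kf_and_double_bracket_ne_zero
    (K : Type*) [Field K] [IsAlgClosed K] [CharZero K]
    (g : Type*) [LieRing g] [LieAlgebra K g] [FiniteDimensional K g]
    [LieAlgebra.IsSemisimple K g]
    (θ : g →ₗ⁅K⁆ g) (hθ : ∀ x, θ (θ x) = x)
    (e h f : g) (hpe : θ e = -e) (hpf : θ f = -f) (hkh : θ h = h)
    (hhe : ⁅h, e⁆ = (2 : K) • e) (hhf : ⁅h, f⁆ = -((2 : K) • f)) (hef : ⁅e, f⁆ = h)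
    (t : g) (hpt : θ t = -t) (hte : ⁅t, e⁆ = 0) (hth : ⁅t, h⁆ = 0)
    (ξ : g) (hfξ : ⁅f, ξ⁆ = 0) (hhξ : ⁅h, ξ⁆ = -ξ)
    (htξ : ⁅t, ξ⁆ = ξ) (htθξ : ⁅t, θ ξ⁆ = -θ ξ)
    (hL : killingForm K g e ⁅ξ, θ ξ⁆ ≠ 0) :
    θ (ξ + θ ξ) = ξ + θ ξ ∧ ⁅f, ξ + θ ξ⁆ = 0 ∧ ⁅h, ξ + θ ξ⁆ = -(ξ + θ ξ) ∧
      ⁅⁅e, ξ + θ ξ⁆, ξ + θ ξ⁆ ≠ 0 :=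
  z_in_kf_and_double_bracket_ne_zero_general K g θ hθ e h f hpf hkh t ξ hfξ hhξ htξ htθξ hL
end
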